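/- arXiv:1302.0988 — 4 statements merged into one kernel-verified Lean document; each statement's English description precedes it below -/
import Mathlib

section
/- Let a, b ∈ (0,1] with a ≤ b. Then the function g : [0,1] → ℝ defined by g(s) = (s·a + (1−s²)·b)/(s²·a + (1−s²)·b) satisfies 1 ≤ g(s) ≤ 5/4 for all s ∈ [0,1]. -/
/-! Write `N` and `D` for the numerator and denominator of `g s`. Since `a ≤ b`, `D` is a convex
combination dominating `a > 0`, and the bounds follow from the identities
`N - D = a s (1 - s)` and `5 D - 4 N = a (2 s - 1)² + (1 - s²)(b - a)`. -/

section

variable {a b s : ℝ}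

lemma le_sq_mul_add_one_sub_sq_mul (hab : a ≤ b) (hs : s ∈ Set.Icc (0 : ℝ) 1) :
    a ≤ s ^ 2 * a + (1 - s ^ 2) * b := by
  have hs2 : 0 ≤ 1 - s ^ 2 := by nlinarith [hs.1, hs.2]
  nlinarith [mul_nonneg hs2 (sub_nonneg.2 hab)]

lemma numer_sub_denom_eq (a b s : ℝ) :
    (s * a + (1 - s ^ 2) * b) - (s ^ 2 * a + (1 - s ^ 2) * b) = a * (s * (1 - s)) := by
  ring

lemma five_mul_denom_sub_four_mul_numer_eq (a b s : ℝ) :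
    5 * (s ^ 2 * a + (1 - s ^ 2) * b) - 4 * (s * a + (1 - s ^ 2) * b)
      = a * (2 * s - 1) ^ 2 + (1 - s ^ 2) * (b - a) := by
  ring

end

theorem stmt0_general (a b : ℝ) (ha : 0 < a) (hab : a ≤ b)
    (g : ℝ → ℝ)
    (hg : ∀ s, g s = (s * a + (1 - s ^ 2) * b) / (s ^ 2 * a + (1 - s ^ 2) * b)) :
    ∀ s ∈ Set.Icc (0 : ℝ) 1, 1 ≤ g s ∧ g s ≤ 5 / 4 := by
  intro s hs
  have hD : 0 < s ^ 2 * a + (1 - s ^ 2) * b := ha.trans_le (le_sq_mul_add_one_sub_sq_mul hab hs)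
  have hs2 : 0 ≤ 1 - s ^ 2 := by nlinarith [hs.1, hs.2]
  have hN_sub_D : 0 ≤ a * (s * (1 - s)) :=
    mul_nonneg ha.le (mul_nonneg hs.1 (sub_nonneg.2 hs.2))
  have h5D_sub_4N : 0 ≤ a * (2 * s - 1) ^ 2 + (1 - s ^ 2) * (b - a) :=
    add_nonneg (mul_nonneg ha.le (sq_nonneg _)) (mul_nonneg hs2 (sub_nonneg.2 hab))
  rw [hg, one_le_div hD, div_le_iff₀ hD]
  constructor
  · linarith [numer_sub_denom_eq a b s]
  · linarith [five_mul_denom_sub_four_mul_numer_eq a b s]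

theorem stmt0 (a b : ℝ) (ha : 0 < a) (hab : a ≤ b) (hb : b ≤ 1)
    (g : ℝ → ℝ)
    (hg : ∀ s, g s = (s * a + (1 - s ^ 2) * b) / (s ^ 2 * a + (1 - s ^ 2) * b)) :
    ∀ s ∈ Set.Icc (0 : ℝ) 1, 1 ≤ g s ∧ g s ≤ 5 / 4 :=
  stmt0_general a b ha hab g hg
end

section
/- The maximum over s ∈ [0,1] of g(s) = (s·a + (1−s²)·b)/(s²·a + (1−s²)·b), for 0 < a ≤ b ≤ 1, is attained at s = √b/(√b + √a), and the maximum value equals 1 + a/(2√b(√a + √b)). -/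
/-!
Write `a = p²`, `b = q²` and `D(s) = s²a + (1 - s²)b`. Then `g(s) = 1 + a·s(1-s)/D(s)`, and the
whole statement rests on the identity `D(s) - 2q(p+q)·s(1-s) = ((p+q)s - q)²`: it gives
`s(1-s)/D(s) ≤ 1/(2q(p+q))`, with equality exactly at `s = q/(q+p)`.
-/

lemma sq_mul_add_one_sub_sq_mul_pos {a b s : ℝ} (ha : 0 < a) (hb : 0 < b) (hs : s ^ 2 ≤ 1) :
    0 < s ^ 2 * a + (1 - s ^ 2) * b := by
  have hmin := mul_le_mul_of_nonneg_left (min_le_left a b) (sq_nonneg s)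
  have hmin' := mul_le_mul_of_nonneg_left (min_le_right a b) (sub_nonneg.2 hs)
  linarith [lt_min ha hb]

lemma div_sq_mul_add_one_sub_sq_mul {a b s : ℝ} (hD : s ^ 2 * a + (1 - s ^ 2) * b ≠ 0) :
    (s * a + (1 - s ^ 2) * b) / (s ^ 2 * a + (1 - s ^ 2) * b) =
      1 + a * (s * (1 - s)) / (s ^ 2 * a + (1 - s ^ 2) * b) := by
  field_simp
  ring

lemma sq_mul_add_one_sub_sq_mul_sub_eq_sq (p q s : ℝ) :
    s ^ 2 * p ^ 2 + (1 - s ^ 2) * q ^ 2 - 2 * q * (p + q) * (s * (1 - s)) = ((p + q) * s - q) ^ 2 := by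
  ring

lemma two_mul_mul_le_sq_mul_add_one_sub_sq_mul (p q s : ℝ) :
    2 * q * (p + q) * (s * (1 - s)) ≤ s ^ 2 * p ^ 2 + (1 - s ^ 2) * q ^ 2 :=
  sub_nonneg.1 (sq_mul_add_one_sub_sq_mul_sub_eq_sq p q s ▸ sq_nonneg _)

lemma div_sq_mul_add_one_sub_sq_mul_le {p q s : ℝ} (hp : 0 < p) (hq : 0 < q) (hs : s ^ 2 ≤ 1) :
    (s * p ^ 2 + (1 - s ^ 2) * q ^ 2) / (s ^ 2 * p ^ 2 + (1 - s ^ 2) * q ^ 2) ≤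
      1 + p ^ 2 / (2 * q * (p + q)) := by
  have hD := sq_mul_add_one_sub_sq_mul_pos (pow_pos hp 2) (pow_pos hq 2) hs
  rw [div_sq_mul_add_one_sub_sq_mul hD.ne', add_le_add_iff_left, div_le_div_iff₀ hD (by positivity)]
  calc p ^ 2 * (s * (1 - s)) * (2 * q * (p + q))
      = p ^ 2 * (2 * q * (p + q) * (s * (1 - s))) := by ring
    _ ≤ p ^ 2 * (s ^ 2 * p ^ 2 + (1 - s ^ 2) * q ^ 2) :=
      mul_le_mul_of_nonneg_left (two_mul_mul_le_sq_mul_add_one_sub_sq_mul p q s) (sq_nonneg p)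

lemma div_sq_mul_add_one_sub_sq_mul_at_div {p q : ℝ} (hp : 0 < p) (hq : 0 < q) :
    (q / (q + p) * p ^ 2 + (1 - (q / (q + p)) ^ 2) * q ^ 2) /
        ((q / (q + p)) ^ 2 * p ^ 2 + (1 - (q / (q + p)) ^ 2) * q ^ 2) =
      1 + p ^ 2 / (2 * q * (p + q)) := by
  set s := q / (q + p) with hs_def
  have hs : (p + q) * s - q = 0 := by
    rw [hs_def, add_comm p q, mul_div_cancel₀ _ (by positivity), sub_self]
  have hs_pos : 0 < s * (1 - s) := by
    have : s < 1 := (div_lt_one (by positivity)).2 (by linarith)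
    exact mul_pos (by positivity) (by linarith)
  have hD : s ^ 2 * p ^ 2 + (1 - s ^ 2) * q ^ 2 = 2 * q * (p + q) * (s * (1 - s)) := by
    rw [← sub_eq_zero, sq_mul_add_one_sub_sq_mul_sub_eq_sq, hs, sq, mul_zero]
  rw [div_sq_mul_add_one_sub_sq_mul (hD ▸ (by positivity)), hD, mul_div_mul_right _ _ hs_pos.ne']

theorem stmt1_general (a b : ℝ) (ha : 0 < a) (hab : a ≤ b)
    (g : ℝ → ℝ)
    (hg : ∀ s, g s = (s * a + (1 - s ^ 2) * b) / (s ^ 2 * a + (1 - s ^ 2) * b)) :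
    Real.sqrt b / (Real.sqrt b + Real.sqrt a) ∈ Set.Icc (0 : ℝ) 1 ∧
    IsMaxOn g (Set.Icc (0 : ℝ) 1) (Real.sqrt b / (Real.sqrt b + Real.sqrt a)) ∧
    g (Real.sqrt b / (Real.sqrt b + Real.sqrt a)) =
      1 + a / (2 * Real.sqrt b * (Real.sqrt a + Real.sqrt b)) := by
  obtain ⟨p, hp, rfl⟩ : ∃ p, 0 < p ∧ p ^ 2 = a := ⟨√a, Real.sqrt_pos.2 ha, Real.sq_sqrt ha.le⟩
  obtain ⟨q, hq, rfl⟩ : ∃ q, 0 < q ∧ q ^ 2 = b :=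
    ⟨√b, Real.sqrt_pos.2 (ha.trans_le hab), Real.sq_sqrt (ha.trans_le hab).le⟩
  rw [Real.sqrt_sq hp.le, Real.sqrt_sq hq.le]
  have hmax : g (q / (q + p)) = 1 + p ^ 2 / (2 * q * (p + q)) := by
    rw [hg, div_sq_mul_add_one_sub_sq_mul_at_div hp hq]
  refine ⟨⟨by positivity, div_le_one_of_le₀ (by linarith) (by positivity)⟩, fun s hs ↦ ?_, hmax⟩
  rw [Set.mem_ofPred_eq, hmax, hg]
  exact div_sq_mul_add_one_sub_sq_mul_le hp hq (pow_le_one₀ hs.1 hs.2)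

theorem stmt1 (a b : ℝ) (ha : 0 < a) (hab : a ≤ b) (hb : b ≤ 1)
    (g : ℝ → ℝ)
    (hg : ∀ s, g s = (s * a + (1 - s ^ 2) * b) / (s ^ 2 * a + (1 - s ^ 2) * b)) :
    Real.sqrt b / (Real.sqrt b + Real.sqrt a) ∈ Set.Icc (0 : ℝ) 1 ∧
    IsMaxOn g (Set.Icc (0 : ℝ) 1) (Real.sqrt b / (Real.sqrt b + Real.sqrt a)) ∧
    g (Real.sqrt b / (Real.sqrt b + Real.sqrt a)) =
      1 + a / (2 * Real.sqrt b * (Real.sqrt a + Real.sqrt b)) :=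
  stmt1_general a b ha hab g hg
end

section
/- A 3×3 symmetric real matrix R lies in the open set M₃ = int{Σᵢ aᵢ(Id − bᵢ⊗bᵢ) : aᵢ > 0, bᵢ ∈ S², m ∈ ℕ} if and only if (tr R / 2)·Id − R is positive definite. -/
/-- The cone generated by matrices `Id - b ⊗ b` with `b` in the unit sphere `S²`. -/
def coneM3 : Set (Matrix (Fin 3) (Fin 3) ℝ) :=
  {S | ∃ (m : ℕ) (c : Fin m → ℝ) (b : Fin m → (Fin 3 → ℝ)),
    (∀ i, 0 < c i) ∧ (∀ i, ∑ j, (b i j) ^ 2 = 1) ∧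
    S = ∑ i, c i • ((1 : Matrix (Fin 3) (Fin 3) ℝ) - Matrix.vecMulVec (b i) (b i))}

/-- `M₃` : the interior, within the space of symmetric 3×3 matrices, of the cone `coneM3`. -/
def M3 : Set {A : Matrix (Fin 3) (Fin 3) ℝ // A.IsSymm} :=
  interior (Subtype.val ⁻¹' coneM3)

/-! The linear map `T A = (tr A / 2) • 1 - A` sends each generator `1 - b ⊗ b` to `b ⊗ b` and is
inverted by `B ↦ (tr B) • 1 - B`; since every positive semidefinite matrix is a sum of squares
`v ⊗ v`, the cone is exactly the preimage under `T` of the positive semidefinite cone. Passing to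
interiors within the symmetric matrices turns semidefinite into definite: positive definiteness is
an open condition, and if `R` is interior then `R - ε • 1` lies in the cone for some `ε > 0`, so
`T R = T (R - ε • 1) + (ε / 2) • 1` is positive definite. -/

open Matrix Filter Topology

theorem Matrix.PosDef.eventually_dotProduct_mulVec_pos {n : Type*} [Fintype n]
    {M : Matrix n n ℝ} (hM : M.PosDef) : ∀ᶠ A in 𝓝 M, ∀ x ≠ 0, 0 < x ⬝ᵥ A *ᵥ x := by
  have hcont : Continuous fun p : Matrix n n ℝ × (n → ℝ) => p.2 ⬝ᵥ p.1 *ᵥ p.2 :=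
    continuous_snd.dotProduct (continuous_fst.matrix_mulVec continuous_snd)
  have hsphere : ∀ᶠ A in 𝓝 M, ∀ u ∈ Metric.sphere (0 : n → ℝ) 1, 0 < u ⬝ᵥ A *ᵥ u :=
    (isCompact_sphere 0 1).eventually_forall_of_forall_eventually fun u hu =>
      hcont.continuousAt.eventually <| lt_mem_nhds <|
        hM.dotProduct_mulVec_pos (ne_zero_of_mem_unit_sphere ⟨u, hu⟩)
  filter_upwards [hsphere] with A hA x hx
  have hx' : 0 < ‖x‖ := norm_pos_iff.mpr hx
  have hscale : x ⬝ᵥ A *ᵥ x = ‖x‖ ^ 2 * ((‖x‖⁻¹ • x) ⬝ᵥ A *ᵥ (‖x‖⁻¹ • x)) := by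
    simp only [mulVec_smul, smul_dotProduct, dotProduct_smul, smul_eq_mul]
    field_simp
  rw [hscale]
  exact mul_pos (by positivity) (hA _ (by simp [norm_smul, hx'.ne']))

noncomputable def halfTraceSub : Matrix (Fin 3) (Fin 3) ℝ →ₗ[ℝ] Matrix (Fin 3) (Fin 3) ℝ :=
  (traceLinearMap (Fin 3) ℝ ℝ).smulRight ((2⁻¹ : ℝ) • 1) - LinearMap.id

theorem halfTraceSub_apply (A : Matrix (Fin 3) (Fin 3) ℝ) :
    halfTraceSub A = (A.trace / 2) • 1 - A := by
  simp [halfTraceSub, smul_smul, div_eq_mul_inv]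

theorem halfTraceSub_smul_one (a : ℝ) : halfTraceSub (a • 1) = (a / 2) • 1 := by
  rw [halfTraceSub_apply, trace_smul, trace_one, ← sub_smul]
  norm_num
  ring_nf

theorem halfTraceSub_one_sub_vecMulVec {b : Fin 3 → ℝ} (hb : ∑ j, b j ^ 2 = 1) :
    halfTraceSub (1 - vecMulVec b b) = vecMulVec b b := by
  have htrace : (1 - vecMulVec b b).trace = 2 := by
    simp only [trace_sub, trace_one, trace_vecMulVec, dotProduct, ← sq, hb]
    norm_num
  rw [halfTraceSub_apply, htrace]
  simp

theorem trace_halfTraceSub_smul_one_sub (A : Matrix (Fin 3) (Fin 3) ℝ) :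
    (halfTraceSub A).trace • 1 - halfTraceSub A = A := by
  rw [halfTraceSub_apply, trace_sub, trace_smul, trace_one]
  norm_num
  module

theorem isHermitian_halfTraceSub {A : Matrix (Fin 3) (Fin 3) ℝ} (hA : A.IsSymm) :
    (halfTraceSub A).IsHermitian := by
  rw [halfTraceSub_apply]
  exact ((isSymm_one.smul (A.trace / 2)).sub hA : IsSymm _)

theorem zero_mem_coneM3 : 0 ∈ coneM3 :=
  ⟨0, Fin.elim0, Fin.elim0, fun i => i.elim0, fun i => i.elim0, by simp⟩

theorem add_mem_coneM3 {A B : Matrix (Fin 3) (Fin 3) ℝ} (hA : A ∈ coneM3) (hB : B ∈ coneM3) :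
    A + B ∈ coneM3 := by
  obtain ⟨m, c, b, hc, hb, rfl⟩ := hA
  obtain ⟨m', c', b', hc', hb', rfl⟩ := hB
  refine ⟨m + m', Fin.append c c', Fin.append b b', Fin.addCases ?_ ?_, Fin.addCases ?_ ?_, ?_⟩
  all_goals simp [Fin.sum_univ_add, *]

theorem dotProduct_self_smul_one_sub_vecMulVec_mem_coneM3 (v : Fin 3 → ℝ) :
    (v ⬝ᵥ v) • 1 - vecMulVec v v ∈ coneM3 := by
  rcases eq_or_ne v 0 with rfl | hv
  · simpa using zero_mem_coneM3
  have hpos : 0 < v ⬝ᵥ v := by simpa using dotProduct_star_self_pos_iff.mpr hv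
  have hsq : √(v ⬝ᵥ v) ^ 2 = v ⬝ᵥ v := Real.sq_sqrt hpos.le
  refine ⟨1, fun _ => v ⬝ᵥ v, fun _ => (√(v ⬝ᵥ v))⁻¹ • v, fun _ => hpos, fun _ => ?_, ?_⟩
  · have hsum : ∑ j, v j ^ 2 = v ⬝ᵥ v := by simp only [dotProduct, sq]
    simp only [Pi.smul_apply, smul_eq_mul, mul_pow, ← Finset.mul_sum, inv_pow, hsq, hsum,
      inv_mul_cancel₀ hpos.ne']
  · simp only [Finset.univ_unique, Finset.sum_singleton, smul_sub, smul_vecMulVec,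
      vecMulVec_smul, smul_smul, ← sq, inv_pow, hsq, mul_inv_cancel₀ hpos.ne', one_smul]

theorem mem_coneM3_iff_posSemidef_halfTraceSub {A : Matrix (Fin 3) (Fin 3) ℝ} :
    A ∈ coneM3 ↔ (halfTraceSub A).PosSemidef := by
  constructor
  · rintro ⟨m, c, b, hc, hb, rfl⟩
    simp only [map_sum, map_smul, halfTraceSub_one_sub_vecMulVec (hb _)]
    exact posSemidef_sum _ fun i _ => (posSemidef_vecMulVec_self_star (b i)).smul (hc i).le
  · intro hA
    obtain ⟨m, v, hv⟩ := posSemidef_iff_eq_sum_vecMulVec.mp hA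
    have hsum : A = ∑ i, ((v i ⬝ᵥ v i) • 1 - vecMulVec (v i) (v i)) := by
      rw [← trace_halfTraceSub_smul_one_sub A, hv]
      simp [trace_sum, trace_vecMulVec, Finset.sum_smul]
    rw [hsum]
    exact Finset.sum_induction _ (· ∈ coneM3) (fun _ _ => add_mem_coneM3) zero_mem_coneM3
      fun i _ => dotProduct_self_smul_one_sub_vecMulVec_mem_coneM3 (v i)

theorem exists_pos_sub_smul_one_mem_coneM3 {R : {A : Matrix (Fin 3) (Fin 3) ℝ // A.IsSymm}}
    (hR : R ∈ M3) : ∃ ε : ℝ, 0 < ε ∧ R.1 - ε • 1 ∈ coneM3 := by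
  let shift (ε : ℝ) : {A : Matrix (Fin 3) (Fin 3) ℝ // A.IsSymm} :=
    ⟨R.1 - ε • 1, R.2.sub (isSymm_one.smul ε)⟩
  have hshift : Tendsto shift (𝓝 0) (𝓝 R) := by
    have : Continuous shift := by fun_prop
    simpa [shift] using this.tendsto 0
  have hnear := hshift.eventually (mem_interior_iff_mem_nhds.mp hR)
  have hnear_right : ∀ᶠ ε in 𝓝[>] 0, shift ε ∈ Subtype.val ⁻¹' coneM3 ∧ 0 < ε :=
    (hnear.filter_mono nhdsWithin_le_nhds).and self_mem_nhdsWithin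
  obtain ⟨ε, hmem, hε⟩ := hnear_right.exists
  exact ⟨ε, hε, hmem⟩

theorem posDef_halfTraceSub_of_mem_M3 {R : {A : Matrix (Fin 3) (Fin 3) ℝ // A.IsSymm}}
    (hR : R ∈ M3) : (halfTraceSub R.1).PosDef := by
  obtain ⟨ε, hε, hmem⟩ := exists_pos_sub_smul_one_mem_coneM3 hR
  have hpsd := mem_coneM3_iff_posSemidef_halfTraceSub.mp hmem
  rw [map_sub, halfTraceSub_smul_one] at hpsd
  simpa using PosDef.posSemidef_add hpsd (PosDef.one.smul (half_pos hε))

theorem mem_M3_of_posDef_halfTraceSub {R : {A : Matrix (Fin 3) (Fin 3) ℝ // A.IsSymm}}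
    (hR : (halfTraceSub R.1).PosDef) : R ∈ M3 := by
  have hcont : Continuous fun A : {A : Matrix (Fin 3) (Fin 3) ℝ // A.IsSymm} => halfTraceSub A.1 :=
    halfTraceSub.continuous_of_finiteDimensional.comp continuous_subtype_val
  rw [M3, mem_interior_iff_mem_nhds]
  filter_upwards [hcont.continuousAt.eventually hR.eventually_dotProduct_mulVec_pos] with A hA
  refine mem_coneM3_iff_posSemidef_halfTraceSub.mpr (PosDef.posSemidef ?_)
  exact .of_dotProduct_mulVec_pos (isHermitian_halfTraceSub A.2) (by simpa using hA)

theorem stmt4 (R : {A : Matrix (Fin 3) (Fin 3) ℝ // A.IsSymm}) :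
    R ∈ M3 ↔ ((R.1.trace / 2) • (1 : Matrix (Fin 3) (Fin 3) ℝ) - R.1).PosDef := by
  rw [← halfTraceSub_apply]
  exact ⟨posDef_halfTraceSub_of_mem_M3, mem_M3_of_posDef_halfTraceSub⟩
end

section
/- With notation as in the Beltrami flow construction, the average of W⊗W over the torus equals Σ_{|k|=λ₀} |a_k|² (Id − (k/|k|)⊗(k/|k|)); that is, (1/(2π)³) ∫_{𝕋³} W⊗W dξ = Σ_{|k|=λ₀} |a_k|² (Id − (k/|k|)⊗(k/|k|)). -/
open MeasureTheory Matrix Complex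

/-! Expanding `W ⊗ W` as a double Fourier sum, orthogonality of the characters `e^{ik·ξ}` on the
torus keeps only the pairs `l = -k`, so the average is `∑ₖ a_k a_{-k} B_k ⊗ B_{-k}`. Here
`a_k a_{-k} = |a_k|²` and `B_{±k} = A_k ± i C_k` with `C_k = (k/λ) × A_k`; symmetrizing under
`k ↦ -k` cancels the cross terms and leaves `|a_k|² (A_k ⊗ A_k + C_k ⊗ C_k)`. Since
`A_k, C_k, k/λ` is an orthonormal frame, `A_k ⊗ A_k + C_k ⊗ C_k = Id - (k/λ) ⊗ (k/λ)`. -/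

theorem Finset.sum_eq_sum_of_add_neg_eq_two_nsmul {G M : Type*} [InvolutiveNeg G]
    [AddCommGroup M] [IsAddTorsionFree M] {K : Finset G} (hK : ∀ k ∈ K, -k ∈ K)
    {f g : G → M} (h : ∀ k ∈ K, f k + f (-k) = 2 • g k) :
    ∑ k ∈ K, f k = ∑ k ∈ K, g k := by
  have hneg : ∑ k ∈ K, f (-k) = ∑ k ∈ K, f k :=
    Finset.sum_nbij' Neg.neg Neg.neg (fun k hk => hK k hk) (fun k hk => hK k hk)
      (fun k _ => neg_neg k) (fun k _ => neg_neg k) (fun _ _ => rfl)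
  apply nsmul_right_injective two_ne_zero
  calc 2 • ∑ k ∈ K, f k = ∑ k ∈ K, (f k + f (-k)) := by
        rw [Finset.sum_add_distrib, hneg, two_nsmul]
    _ = 2 • ∑ k ∈ K, g k := by rw [Finset.smul_sum]; exact Finset.sum_congr rfl h

theorem cross_apply_mul_cross_apply {R : Type*} [CommRing R] (a b : Fin 3 → R) (i j : Fin 3) :
    (b ⨯₃ a) i * (b ⨯₃ a) j =
      ((a ⬝ᵥ a) * (b ⬝ᵥ b) - (a ⬝ᵥ b) ^ 2) * (if i = j then 1 else 0)
      - (b ⬝ᵥ b) * (a i * a j) - (a ⬝ᵥ a) * (b i * b j)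
      + (a ⬝ᵥ b) * (a i * b j + a j * b i) := by
  fin_cases i <;> fin_cases j <;> simp [cross_apply, dotProduct, Fin.sum_univ_three] <;> ring

theorem mul_add_cross_mul_cross_of_orthonormal {R : Type*} [CommRing R] {a b : Fin 3 → R}
    (ha : a ⬝ᵥ a = 1) (hb : b ⬝ᵥ b = 1) (hab : a ⬝ᵥ b = 0) (i j : Fin 3) :
    a i * a j + (b ⨯₃ a) i * (b ⨯₃ a) j = (if i = j then 1 else 0) - b i * b j := by
  rw [cross_apply_mul_cross_apply, ha, hb, hab]
  ring

theorem integral_exp_int_mul_Icc (n : ℤ) :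
    ∫ t in Set.Icc 0 (2 * Real.pi), exp (I * ((n * t : ℝ) : ℂ)) =
      if n = 0 then ((2 * Real.pi : ℝ) : ℂ) else 0 := by
  rw [integral_Icc_eq_integral_Ioc, ← intervalIntegral.integral_of_le Real.two_pi_pos.le]
  split_ifs with hn
  · simp [hn]
  · have hc : I * ((n : ℝ) : ℂ) ≠ 0 := by simp [hn]
    have h2pi : I * ((n : ℝ) : ℂ) * ((2 * Real.pi : ℝ) : ℂ) = n * (2 * Real.pi * I) := by
      push_cast; ring
    simp_rw [ofReal_mul, ← mul_assoc]
    rw [integral_exp_mul_complex hc, h2pi, exp_int_mul_two_pi_mul_I]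
    simp

noncomputable def torusChar {ι : Type*} [Fintype ι] (k : ι → ℤ) (ξ : ι → ℝ) : ℂ :=
  exp (I * ∑ m, (k m : ℝ) * ξ m)

section torusChar

variable {ι : Type*} [Fintype ι]

theorem torusChar_eq_prod (k : ι → ℤ) (ξ : ι → ℝ) :
    torusChar k ξ = ∏ m, exp (I * ((k m * ξ m : ℝ) : ℂ)) := by
  rw [torusChar, ofReal_sum, Finset.mul_sum, exp_sum]

theorem torusChar_add (k l : ι → ℤ) (ξ : ι → ℝ) :
    torusChar (k + l) ξ = torusChar k ξ * torusChar l ξ := by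
  simp only [torusChar, ← exp_add, ← mul_add, ← ofReal_add, ← Finset.sum_add_distrib,
    Pi.add_apply, Int.cast_add, add_mul]

@[fun_prop]
theorem continuous_torusChar (k : ι → ℤ) : Continuous (torusChar k) := by
  unfold torusChar; fun_prop

theorem integral_torusChar (k : ι → ℤ) :
    ∫ ξ in Set.Icc 0 (fun _ => 2 * Real.pi), torusChar k ξ =
      if k = 0 then ((2 * Real.pi : ℝ) : ℂ) ^ Fintype.card ι else 0 := by
  simp_rw [torusChar_eq_prod, ← Set.pi_univ_Icc, volume_pi, Measure.restrict_pi_pi]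
  rw [integral_fintype_prod_eq_prod fun m t => exp (I * ((k m * t : ℝ) : ℂ))]
  simp_rw [Pi.zero_apply, integral_exp_int_mul_Icc, Finset.prod_ite_zero,
    Finset.prod_const, Finset.card_univ, funext_iff, Pi.zero_apply, Finset.mem_univ, true_implies]

theorem integral_sum_mul_sum_torusChar {K : Finset (ι → ℤ)} (hK : ∀ k ∈ K, -k ∈ K)
    (c d : (ι → ℤ) → ℂ) :
    ∫ ξ in Set.Icc 0 (fun _ => 2 * Real.pi),
        (∑ k ∈ K, c k * torusChar k ξ) * (∑ l ∈ K, d l * torusChar l ξ) =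
      ((2 * Real.pi : ℝ) : ℂ) ^ Fintype.card ι * ∑ k ∈ K, c k * d (-k) := by
  have hint : ∀ (e : ℂ) (n : ι → ℤ),
      Integrable (fun ξ => e * torusChar n ξ) (volume.restrict (Set.Icc 0 fun _ => 2 * Real.pi)) :=
    fun e n => (by fun_prop : Continuous fun ξ => e * torusChar n ξ).integrableOn_Icc
  simp_rw [Finset.sum_mul_sum, mul_mul_mul_comm, ← torusChar_add]
  rw [integral_finsetSum _ fun k _ => integrable_finsetSum _ fun l _ => hint _ _,
    Finset.mul_sum]
  refine Finset.sum_congr rfl fun k hk => ?_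
  simp_rw [integral_finsetSum _ fun l _ => hint _ _, integral_const_mul, integral_torusChar,
    add_eq_zero_iff_eq_neg', mul_ite, mul_zero, Finset.sum_ite_eq', if_pos (hK k hk)]
  ring

end torusChar

theorem add_I_mul_cross_mul_add_I_mul_neg_cross {a b : Fin 3 → ℂ} (ha : a ⬝ᵥ a = 1)
    (hb : b ⬝ᵥ b = 1) (hab : a ⬝ᵥ b = 0) (i j : Fin 3) :
    (a i + I * (b ⨯₃ a) i) * (a j + I * ((-b) ⨯₃ a) j) +
        (a i + I * ((-b) ⨯₃ a) i) * (a j + I * (b ⨯₃ a) j) =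
      2 * ((if i = j then 1 else 0) - b i * b j) := by
  simp only [LinearMap.map_neg₂, Pi.neg_apply]
  linear_combination 2 * mul_add_cross_mul_cross_of_orthonormal ha hb hab i j -
    2 * (b ⨯₃ a) i * (b ⨯₃ a) j * I_sq

noncomputable def beltramiVec (lam : ℝ) (k : Fin 3 → ℤ) (A : Fin 3 → ℝ) : Fin 3 → ℂ :=
  fun j => (A j : ℂ) + I * ((fun m => ((k m / lam : ℝ) : ℂ)) ⨯₃ (fun m => (A m : ℂ))) j

theorem beltramiVec_mul_neg_add {lam : ℝ} (hlam : lam ≠ 0) {k : Fin 3 → ℤ} {A : Fin 3 → ℝ}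
    (hk : ∑ m, (k m : ℝ) ^ 2 = lam ^ 2) (hAk : ∑ m, A m * (k m : ℝ) = 0)
    (hA : ∑ m, A m ^ 2 = 1) (i j : Fin 3) :
    beltramiVec lam k A i * beltramiVec lam (-k) A j +
        beltramiVec lam (-k) A i * beltramiVec lam k A j =
      2 * ((if i = j then 1 else 0) - (k i : ℂ) * (k j : ℂ) / (lam : ℂ) ^ 2) := by
  set b : Fin 3 → ℝ := fun m => k m / lam with hb
  have hbb : b ⬝ᵥ b = 1 := by
    simp only [hb, dotProduct, ← sq, div_pow, ← Finset.sum_div, hk]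
    exact div_self (pow_ne_zero 2 hlam)
  have hAb : A ⬝ᵥ b = 0 := by
    simp only [hb, dotProduct, mul_div_assoc', ← Finset.sum_div, hAk, zero_div]
  have hAA : A ⬝ᵥ A = 1 := by simpa only [dotProduct, sq] using hA
  have hpos : beltramiVec lam k A =
      fun j => (ofRealHom ∘ A) j + I * ((ofRealHom ∘ b) ⨯₃ (ofRealHom ∘ A)) j := rfl
  have hneg : beltramiVec lam (-k) A =
      fun j => (ofRealHom ∘ A) j + I * ((-(ofRealHom ∘ b)) ⨯₃ (ofRealHom ∘ A)) j := by
    have : (fun m => ((((-k) m : ℝ) / lam : ℝ) : ℂ)) = -(ofRealHom ∘ b) := by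
      ext m; simp [hb, neg_div]
    unfold beltramiVec
    rw [this]
    rfl
  rw [hpos, hneg, add_I_mul_cross_mul_add_I_mul_neg_cross
    (by rw [← RingHom.map_dotProduct, hAA, map_one])
    (by rw [← RingHom.map_dotProduct, hbb, map_one])
    (by rw [← RingHom.map_dotProduct, hAb, map_zero])]
  simp only [hb, Function.comp_apply, ofRealHom_eq_coe, ofReal_div, ofReal_intCast]
  ring

theorem stmt8 (lam : ℝ) (hlam : 1 ≤ lam)
    (K : Finset (Fin 3 → ℤ))
    (hK : ∀ k ∈ K, (∑ m, ((k m : ℝ)) ^ 2) = lam ^ 2)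
    (hKsym : ∀ k ∈ K, -k ∈ K)
    (A : (Fin 3 → ℤ) → (Fin 3 → ℝ))
    (hAk : ∀ k ∈ K, ∑ m, A k m * (k m : ℝ) = 0)
    (hAnorm : ∀ k ∈ K, ∑ m, (A k m) ^ 2 = 1)
    (hAsym : ∀ k ∈ K, A (-k) = A k)
    (a : (Fin 3 → ℤ) → ℂ)
    (ha : ∀ k ∈ K, a (-k) = starRingEnd ℂ (a k))
    (B : (Fin 3 → ℤ) → (Fin 3 → ℂ))
    (hB : ∀ k j, B k j = ((A k j : ℝ) : ℂ) +
      Complex.I * (crossProduct (fun m => (((k m : ℝ) / lam : ℝ) : ℂ))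
        (fun m => ((A k m : ℝ) : ℂ))) j)
    (W : (Fin 3 → ℝ) → (Fin 3 → ℂ))
    (hW : ∀ ξ j, W ξ j = ∑ k ∈ K,
      a k * B k j * Complex.exp (Complex.I * (∑ m, (k m : ℝ) * ξ m))) :
    ∀ i j : Fin 3,
      ((1 / (2 * Real.pi) ^ 3 : ℝ) : ℂ) *
          ∫ ξ in Set.Icc (0 : Fin 3 → ℝ) (fun _ => 2 * Real.pi), W ξ i * W ξ j =
        ∑ k ∈ K, ((‖a k‖ ^ 2 : ℝ) : ℂ) *
          ((if i = j then (1 : ℂ) else 0) -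
            ((k i : ℝ) : ℂ) * ((k j : ℝ) : ℂ) / ((lam : ℝ) : ℂ) ^ 2) := by
  intro i j
  have hW' : ∀ ξ j, W ξ j = ∑ k ∈ K, a k * B k j * torusChar k ξ := hW
  have hBk : ∀ k j, B k j = beltramiVec lam k (A k) j := hB
  have hBneg : ∀ k ∈ K, ∀ j, B (-k) j = beltramiVec lam (-k) (A k) j := fun k hk j => by
    rw [hBk, hAsym k hk]
  calc ((1 / (2 * Real.pi) ^ 3 : ℝ) : ℂ) *
          ∫ ξ in Set.Icc (0 : Fin 3 → ℝ) (fun _ => 2 * Real.pi), W ξ i * W ξ j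
      = ∑ k ∈ K, a k * B k i * (a (-k) * B (-k) j) := by
        simp_rw [hW']
        rw [integral_sum_mul_sum_torusChar hKsym, Fintype.card_fin, ← mul_assoc]
        push_cast
        field_simp
    _ = _ := by
      refine Finset.sum_eq_sum_of_add_neg_eq_two_nsmul hKsym fun k hk => ?_
      have hnorm : a k * a (-k) = ((‖a k‖ ^ 2 : ℝ) : ℂ) := by
        rw [ha k hk, mul_conj, normSq_eq_norm_sq]
      rw [neg_neg, two_nsmul, hBneg k hk, hBneg k hk, hBk, hBk, ← hnorm]
      linear_combination a k * a (-k) * beltramiVec_mul_neg_add (zero_lt_one.trans_le hlam).ne'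
        (hK k hk) (hAk k hk) (hAnorm k hk) i j
end
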